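/- arXiv:1804.10633 — 2 statements merged into one kernel-verified Lean document; each statement's English description precedes it below -/
import Mathlib

section
/- Let (θ_i)_{i≥1} be i.i.d. nonnegative random variables with E θ_1^s < ∞ for some s > 0, and let T be a nonnegative integer-valued random variable which does not depend on the future of (θ_i) (i.e., for each n, ((θ_k)_{k≤n}, 1{T≤n}) is independent of (θ_k)_{k>n}) and satisfies E e^{λT} < ∞ for some λ > 0. Then E (∑_{i=1}^T θ_i)^s < ∞. -/
/-!
For `δ > 0`, every `a_i` is at most `e^{-δ i}` times the largest of the numbers `e^{δ j} a_j`,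
so summing a geometric series gives `(∑ a_i)^s ≤ (1 - e^{-δ})^{-s} ∑ e^{δ s i} a_i^s` for every
`s > 0`. For `a_i = θ_i 1{i ≤ T}`, the event `{T ≥ i} = {T ≤ i - 1}ᶜ` is independent of `θ_i`, so
the `i`-th term has expectation `e^{δ s i} E θ_1^s P(T ≥ i)`, and Markov's inequality for `e^{λT}`
bounds it by `e^{(δ s - λ) i} E θ_1^s E e^{λT}`. Taking `δ s = λ / 2` makes the series converge.
-/

open MeasureTheory ProbabilityTheory Real
open scoped ENNReal

lemma sum_le_inv_one_sub_mul_of_le_pow_mul {r M : ℝ} (hr₀ : 0 ≤ r) (hr₁ : r < 1) (hM : 0 ≤ M)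
    {S : Finset ℕ} {a : ℕ → ℝ} (ha : ∀ i ∈ S, a i ≤ r ^ i * M) :
    ∑ i ∈ S, a i ≤ (1 - r)⁻¹ * M :=
  calc ∑ i ∈ S, a i ≤ (∑ i ∈ S, r ^ i) * M := by
        rw [Finset.sum_mul]
        exact Finset.sum_le_sum ha
    _ ≤ (1 - r)⁻¹ * M := by
        gcongr
        rw [← tsum_geometric_of_lt_one hr₀ hr₁]
        exact (summable_geometric_of_lt_one hr₀ hr₁).sum_le_tsum _ fun i _ => pow_nonneg hr₀ i

lemma rpow_sum_le_mul_sum_exp_mul_rpow {s δ : ℝ} (hs : 0 < s) (hδ : 0 < δ) (S : Finset ℕ)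
    {a : ℕ → ℝ} (ha : ∀ i ∈ S, 0 ≤ a i) :
    (∑ i ∈ S, a i) ^ s ≤ (1 - exp (-δ))⁻¹ ^ s * ∑ i ∈ S, exp (δ * s * i) * a i ^ s := by
  rcases S.eq_empty_or_nonempty with rfl | hS
  · simp [zero_rpow hs.ne']
  have hr : exp (-δ) < 1 := exp_lt_one_iff.2 (neg_lt_zero.2 hδ)
  obtain ⟨i₀, hi₀, hmax⟩ := S.exists_max_image (fun i => exp (δ * i) * a i) hS
  have hsum : ∑ i ∈ S, a i ≤ (1 - exp (-δ))⁻¹ * (exp (δ * i₀) * a i₀) := by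
    refine sum_le_inv_one_sub_mul_of_le_pow_mul (exp_pos _).le hr
      (mul_nonneg (exp_pos _).le (ha i₀ hi₀)) fun i hi => ?_
    calc a i = exp (-δ) ^ i * (exp (δ * i) * a i) := by
          rw [← exp_nat_mul, ← mul_assoc, ← exp_add]
          ring_nf
          simp
      _ ≤ exp (-δ) ^ i * (exp (δ * i₀) * a i₀) :=
          mul_le_mul_of_nonneg_left (hmax i hi) (by positivity)
  have h0 : 0 ≤ (1 - exp (-δ))⁻¹ := inv_nonneg.2 (by linarith)
  calc (∑ i ∈ S, a i) ^ s ≤ ((1 - exp (-δ))⁻¹ * (exp (δ * i₀) * a i₀)) ^ s :=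
        rpow_le_rpow (Finset.sum_nonneg ha) hsum hs.le
    _ = (1 - exp (-δ))⁻¹ ^ s * (exp (δ * s * i₀) * a i₀ ^ s) := by
        rw [mul_rpow h0 (mul_nonneg (exp_pos _).le (ha i₀ hi₀)), mul_rpow (exp_pos _).le (ha i₀ hi₀),
          ← exp_mul]
        ring_nf
    _ ≤ (1 - exp (-δ))⁻¹ ^ s * ∑ i ∈ S, exp (δ * s * i) * a i ^ s := by
        gcongr
        exact Finset.single_le_sum (f := fun i : ℕ => exp (δ * s * i) * a i ^ s)
          (fun i hi => mul_nonneg (exp_pos _).le (rpow_nonneg (ha i hi) s)) hi₀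

lemma sum_Icc_one_eq_sum_range {M : Type*} [AddCommMonoid M] (f : ℕ → M) (n : ℕ) :
    ∑ i ∈ Finset.Icc 1 n, f i = ∑ j ∈ Finset.range n, f (j + 1) := by
  rw [Finset.range_eq_Ico, Finset.sum_Ico_add']
  rfl

lemma ofReal_rpow_sum_Icc_le_tsum_indicator {s δ : ℝ} (hs : 0 < s) (hδ : 0 < δ) {a : ℕ → ℝ}
    (ha : ∀ i, 0 ≤ a i) (n : ℕ) :
    ENNReal.ofReal ((∑ i ∈ Finset.Icc 1 n, a i) ^ s) ≤ ENNReal.ofReal ((1 - exp (-δ))⁻¹ ^ s) *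
      ∑' j, (Set.Iio n).indicator
        (fun j => ENNReal.ofReal (exp (δ * s * ↑(j + 1)) * a (j + 1) ^ s)) j := by
  have h := rpow_sum_le_mul_sum_exp_mul_rpow hs hδ (Finset.Icc 1 n) fun i _ => ha i
  rw [sum_Icc_one_eq_sum_range (f := fun i => exp (δ * s * i) * a i ^ s)] at h
  refine (ENNReal.ofReal_le_ofReal h).trans_eq ?_
  have h0 : 0 ≤ 1 - exp (-δ) := by linarith [exp_lt_one_iff.2 (neg_lt_zero.2 hδ)]
  rw [ENNReal.ofReal_mul (by positivity),
    ENNReal.ofReal_sum_of_nonneg fun j _ => mul_nonneg (exp_pos _).le (rpow_nonneg (ha _) s),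
    ← Finset.coe_range, ← sum_eq_tsum_indicator]

section

variable {Ω : Type*} [MeasurableSpace Ω] {μ : Measure Ω}

lemma measure_ge_le_exp_neg_mul_mul_lintegral_exp {X : Ω → ℝ} (hX : AEMeasurable X μ) {t : ℝ}
    (ht : 0 ≤ t) (x : ℝ) :
    μ {ω | x ≤ X ω} ≤ ENNReal.ofReal (exp (-(t * x))) * ∫⁻ ω, ENNReal.ofReal (exp (t * X ω)) ∂μ := by
  calc μ {ω | x ≤ X ω}
      = ENNReal.ofReal (exp (-(t * x))) * (ENNReal.ofReal (exp (t * x)) * μ {ω | x ≤ X ω}) := by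
        rw [← mul_assoc, ← ENNReal.ofReal_mul (exp_pos _).le, ← exp_add, neg_add_cancel, exp_zero,
          ENNReal.ofReal_one, one_mul]
    _ ≤ ENNReal.ofReal (exp (-(t * x))) * (ENNReal.ofReal (exp (t * x)) *
          μ {ω | ENNReal.ofReal (exp (t * x)) ≤ ENNReal.ofReal (exp (t * X ω))}) := by
        gcongr
        intro hω
        exact ENNReal.ofReal_le_ofReal (exp_le_exp.2 (mul_le_mul_of_nonneg_left hω ht))
    _ ≤ ENNReal.ofReal (exp (-(t * x))) * ∫⁻ ω, ENNReal.ofReal (exp (t * X ω)) ∂μ := by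
        gcongr
        exact mul_meas_ge_le_lintegral₀ (by fun_prop) _

lemma setLIntegral_preimage_eq_mul_of_indepFun {α β : Type*} [MeasurableSpace α]
    [MeasurableSpace β] {X : Ω → α} {Y : Ω → β} (hXY : IndepFun X Y μ) (hX : Measurable X)
    (hY : Measurable Y) {g : α → ℝ≥0∞} (hg : Measurable g) {B : Set β} (hB : MeasurableSet B) :
    ∫⁻ ω in Y ⁻¹' B, g (X ω) ∂μ = (∫⁻ ω, g (X ω) ∂μ) * μ (Y ⁻¹' B) := by
  have hind := hXY.comp hg (measurable_one.indicator hB : Measurable (B.indicator (1 : β → ℝ≥0∞)))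
  calc ∫⁻ ω in Y ⁻¹' B, g (X ω) ∂μ = ∫⁻ ω, g (X ω) * B.indicator 1 (Y ω) ∂μ := by
        rw [← lintegral_indicator (hY hB)]
        congr 1 with ω
        by_cases hω : Y ω ∈ B <;> simp [hω]
    _ = (∫⁻ ω, g (X ω) ∂μ) * ∫⁻ ω, B.indicator 1 (Y ω) ∂μ :=
        lintegral_mul_eq_lintegral_mul_lintegral_of_indepFun'' (hg.comp hX).aemeasurable
          ((measurable_one.indicator hB).comp hY).aemeasurable hind
    _ = (∫⁻ ω, g (X ω) ∂μ) * μ (Y ⁻¹' B) := by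
        rw [← lintegral_indicator_one (hY hB)]
        rfl

def IndepOfFuture (θ : ℕ → Ω → ℝ) (T : Ω → ℕ) (μ : Measure Ω) : Prop :=
  ∀ n : ℕ, IndepFun (fun ω => ((fun k : Fin (n + 1) => θ k ω), if T ω ≤ n then (1 : ℝ) else 0))
    (fun ω => (fun k : ℕ => θ (n + 1 + k) ω)) μ

variable {θ : ℕ → Ω → ℝ} {T : Ω → ℕ}

lemma IndepOfFuture.setLIntegral_lt_eq_mul_measure (hfuture : IndepOfFuture θ T μ)
    (hmeas : ∀ i, Measurable (θ i)) (hTmeas : Measurable T)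
    (hident : ∀ i, Measure.map (θ i) μ = Measure.map (θ 1) μ)
    {g : ℝ → ℝ≥0∞} (hg : Measurable g) (n : ℕ) :
    ∫⁻ ω in {ω | n < T ω}, g (θ (n + 1) ω) ∂μ = (∫⁻ ω, g (θ 1 ω) ∂μ) * μ {ω | n < T ω} := by
  have hpast : Measurable fun ω =>
      ((fun k : Fin (n + 1) => θ k ω), if T ω ≤ n then (1 : ℝ) else 0) :=
    (measurable_pi_lambda _ fun k : Fin (n + 1) => hmeas k).prodMk
      ((measurable_from_top (f := fun m : ℕ => if m ≤ n then (1 : ℝ) else 0)).comp hTmeas)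
  have hevent : {ω | n < T ω} = (fun ω =>
      ((fun k : Fin (n + 1) => θ k ω), if T ω ≤ n then (1 : ℝ) else 0)) ⁻¹' (Prod.snd ⁻¹' {0}) := by
    ext ω
    simp
  have hθ : IdentDistrib (θ (n + 1)) (θ 1) μ μ :=
    ⟨(hmeas _).aemeasurable, (hmeas 1).aemeasurable, hident _⟩
  rw [hevent]
  exact (setLIntegral_preimage_eq_mul_of_indepFun (hfuture n).symm
    (measurable_pi_lambda _ fun k => hmeas _) hpast (hg.comp (measurable_pi_apply 0))
    ((measurableSet_singleton 0).preimage measurable_snd)).trans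
    (congrArg (· * _) (hθ.comp hg).lintegral_eq)

lemma IndepOfFuture.setLIntegral_exp_mul_rpow_le (hfuture : IndepOfFuture θ T μ)
    (hmeas : ∀ i, Measurable (θ i)) (hTmeas : Measurable T)
    (hident : ∀ i, Measure.map (θ i) μ = Measure.map (θ 1) μ)
    {s lam ε : ℝ} (hlam : 0 ≤ lam) (n : ℕ) :
    ∫⁻ ω in {ω | n < T ω}, ENNReal.ofReal (exp (ε * ↑(n + 1)) * θ (n + 1) ω ^ s) ∂μ ≤
      ENNReal.ofReal (exp (-(lam - ε))) ^ (n + 1) *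
        ((∫⁻ ω, ENNReal.ofReal (θ 1 ω ^ s) ∂μ) * ∫⁻ ω, ENNReal.ofReal (exp (lam * T ω)) ∂μ) := by
  have hsub : {ω | n < T ω} ⊆ {ω | ((n + 1 : ℕ) : ℝ) ≤ T ω} := fun ω (h : n + 1 ≤ T ω) => by
    exact_mod_cast h
  calc ∫⁻ ω in {ω | n < T ω}, ENNReal.ofReal (exp (ε * ↑(n + 1)) * θ (n + 1) ω ^ s) ∂μ
      = ENNReal.ofReal (exp (ε * ↑(n + 1))) *
          ∫⁻ ω in {ω | n < T ω}, ENNReal.ofReal (θ (n + 1) ω ^ s) ∂μ := by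
        simp_rw [ENNReal.ofReal_mul (exp_pos _).le]
        exact lintegral_const_mul' _ _ ENNReal.ofReal_ne_top
    _ = ENNReal.ofReal (exp (ε * ↑(n + 1))) *
          ((∫⁻ ω, ENNReal.ofReal (θ 1 ω ^ s) ∂μ) * μ {ω | n < T ω}) := by
        rw [hfuture.setLIntegral_lt_eq_mul_measure hmeas hTmeas hident
          (g := fun x => ENNReal.ofReal (x ^ s)) (by fun_prop) n]
    _ ≤ ENNReal.ofReal (exp (ε * ↑(n + 1))) * ((∫⁻ ω, ENNReal.ofReal (θ 1 ω ^ s) ∂μ) *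
          (ENNReal.ofReal (exp (-(lam * ↑(n + 1)))) *
            ∫⁻ ω, ENNReal.ofReal (exp (lam * T ω)) ∂μ)) := by
        gcongr
        exact (measure_mono hsub).trans
          (measure_ge_le_exp_neg_mul_mul_lintegral_exp (by fun_prop) hlam _)
    _ = ENNReal.ofReal (exp (-(lam - ε))) ^ (n + 1) *
          ((∫⁻ ω, ENNReal.ofReal (θ 1 ω ^ s) ∂μ) * ∫⁻ ω, ENNReal.ofReal (exp (lam * T ω)) ∂μ) := by
        rw [mul_left_comm _ (ENNReal.ofReal _), ← mul_assoc, ← ENNReal.ofReal_mul (exp_pos _).le,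
          ← exp_add, ← ENNReal.ofReal_pow (exp_pos _).le, ← exp_nat_mul]
        ring_nf

end

theorem stmt_4_general {Ω : Type*} [MeasurableSpace Ω] (μ : Measure Ω)
    (θ : ℕ → Ω → ℝ) (T : Ω → ℕ) (s lam : ℝ) (hs : 0 < s) (hlam : 0 < lam)
    (hmeas : ∀ i, Measurable (θ i)) (hTmeas : Measurable T)
    (hnonneg : ∀ i ω, 0 ≤ θ i ω)
    (hident : ∀ i, Measure.map (θ i) μ = Measure.map (θ 1) μ)
    (hmom : ∫⁻ ω, ENNReal.ofReal (θ 1 ω ^ s) ∂μ < ⊤)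
    (hTexp : ∫⁻ ω, ENNReal.ofReal (Real.exp (lam * T ω)) ∂μ < ⊤)
    (hfuture : ∀ n : ℕ,
      IndepFun (fun ω => ((fun k : Fin (n + 1) => θ k ω), if T ω ≤ n then (1 : ℝ) else 0))
        (fun ω => (fun k : ℕ => θ (n + 1 + k) ω)) μ) :
    ∫⁻ ω, ENNReal.ofReal ((∑ i ∈ Finset.Icc 1 (T ω), θ i ω) ^ s) ∂μ < ⊤ := by
  set δ := lam / (2 * s)
  have hδ : 0 < δ := by positivity
  set C := ENNReal.ofReal ((1 - exp (-δ))⁻¹ ^ s)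
  set r := ENNReal.ofReal (exp (-(lam - δ * s)))
  have hr : r < 1 := by
    have hδs : δ * s = lam / 2 := by simp only [δ]; field_simp
    exact ENNReal.ofReal_lt_one.2 (exp_lt_one_iff.2 (by linarith))
  have hTgt : ∀ j : ℕ, MeasurableSet {ω | j < T ω} := fun j => hTmeas measurableSet_Ioi
  calc ∫⁻ ω, ENNReal.ofReal ((∑ i ∈ Finset.Icc 1 (T ω), θ i ω) ^ s) ∂μ
      ≤ ∫⁻ ω, C * ∑' j, {ω | j < T ω}.indicator
          (fun ω => ENNReal.ofReal (exp (δ * s * ↑(j + 1)) * θ (j + 1) ω ^ s)) ω ∂μ :=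
        -- `(Set.Iio (T ω)).indicator _ j` and `{ω | j < T ω}.indicator _ ω` are defeq
        lintegral_mono fun ω => ofReal_rpow_sum_Icc_le_tsum_indicator hs hδ (hnonneg · ω) (T ω)
    _ = C * ∑' j, ∫⁻ ω in {ω | j < T ω},
          ENNReal.ofReal (exp (δ * s * ↑(j + 1)) * θ (j + 1) ω ^ s) ∂μ := by
        rw [lintegral_const_mul' _ _ ENNReal.ofReal_ne_top,
          lintegral_tsum fun j => (Measurable.indicator (by fun_prop) (hTgt j)).aemeasurable]
        simp_rw [lintegral_indicator (hTgt _)]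
        rfl
    _ ≤ C * ∑' j, r ^ (j + 1) *
          ((∫⁻ ω, ENNReal.ofReal (θ 1 ω ^ s) ∂μ) * ∫⁻ ω, ENNReal.ofReal (exp (lam * T ω)) ∂μ) := by
        gcongr with j
        exact IndepOfFuture.setLIntegral_exp_mul_rpow_le hfuture hmeas hTmeas hident hlam.le j
    _ < ⊤ := by
        have : (1 - r)⁻¹ ≠ ⊤ := ENNReal.inv_ne_top.2 (tsub_pos_of_lt hr).ne'
        rw [ENNReal.tsum_mul_right, ENNReal.tsum_geometric_add_one]
        finiteness

theorem stmt_4 {Ω : Type*} [MeasurableSpace Ω] (μ : Measure Ω) [IsProbabilityMeasure μ]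
    (θ : ℕ → Ω → ℝ) (T : Ω → ℕ) (s lam : ℝ) (hs : 0 < s) (hlam : 0 < lam)
    (hmeas : ∀ i, Measurable (θ i)) (hTmeas : Measurable T)
    (hnonneg : ∀ i ω, 0 ≤ θ i ω)
    (hindep : iIndepFun θ μ)
    (hident : ∀ i, Measure.map (θ i) μ = Measure.map (θ 1) μ)
    (hmom : ∫⁻ ω, ENNReal.ofReal (θ 1 ω ^ s) ∂μ < ⊤)
    (hTexp : ∫⁻ ω, ENNReal.ofReal (Real.exp (lam * T ω)) ∂μ < ⊤)
    (hfuture : ∀ n : ℕ,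
      IndepFun (fun ω => ((fun k : Fin (n + 1) => θ k ω), if T ω ≤ n then (1 : ℝ) else 0))
        (fun ω => (fun k : ℕ => θ (n + 1 + k) ω)) μ) :
    ∫⁻ ω, ENNReal.ofReal ((∑ i ∈ Finset.Icc 1 (T ω), θ i ω) ^ s) ∂μ < ⊤ :=
  stmt_4_general μ θ T s lam hs hlam hmeas hTmeas hnonneg hident hmom hTexp hfuture
end

section
/- Define sequences of functions a_j : [0, log 2) → ℝ by a_0(x) = 1 and a_j(x) = 1/(2 − e^x a_{j−1}(x)) for j ≥ 1 (whenever the denominator is positive), and set b_j(x) = e^x a_j(x). Then for every γ ∈ (0, 1/4) there exist K > 1 with K − K²γ > 1 and x₀ > 0 such that for all j ≥ 0 and all x ∈ (0, x₀) with j(j+1)x ≤ γ, one has b_j(x) ≤ 1 + Kx(j+1). -/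
lemma exp_le_aux (x : ℝ) (h0 : 0 ≤ x) (h1 : x ≤ 1) :
    Real.exp x ≤ 1 + x + (3/4) * x ^ 2 := by
  have hb := Real.exp_bound (x := x) (by rwa [abs_of_nonneg h0]) (by norm_num : 0 < 2)
  have := abs_le.1 hb
  simp [Finset.sum_range_succ, abs_of_nonneg h0] at this
  nlinarith [this.2]

theorem stmt_5 (a b : ℕ → ℝ → ℝ)
    (ha0 : ∀ x, a 0 x = 1)
    (haS : ∀ j x, a (j + 1) x = 1 / (2 - Real.exp x * a j x))
    (hb : ∀ j x, b j x = Real.exp x * a j x)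
    (γ : ℝ) (hγ0 : 0 < γ) (hγ1 : γ < 1 / 4) :
    ∃ K : ℝ, 1 < K ∧ 1 < K - K ^ 2 * γ ∧
      ∃ x₀ : ℝ, 0 < x₀ ∧ ∀ (j : ℕ) (x : ℝ), 0 < x → x < x₀ →
        (j : ℝ) * ((j : ℝ) + 1) * x ≤ γ → b j x ≤ 1 + K * x * ((j : ℝ) + 1) := by
  set M : ℝ := 2 - 4 * γ with hMdef
  have hM : (1:ℝ) < M := by simp [hMdef]; linarith
  refine ⟨2, by norm_num, by nlinarith, min 1 ((4 * (M - 1)) / 3), ?_, ?_⟩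
  · exact lt_min one_pos (by linarith)
  have hexp : ∀ x : ℝ, 0 < x → x < min 1 ((4 * (M - 1)) / 3) → Real.exp x ≤ 1 + M * x := by
    intro x hx hx0
    have h1 : x ≤ 1 := le_of_lt (lt_of_lt_of_le hx0 (min_le_left _ _))
    have h2 : x ≤ (4 * (M - 1)) / 3 := le_of_lt (lt_of_lt_of_le hx0 (min_le_right _ _))
    have := exp_le_aux x hx.le h1
    nlinarith
  intro j
  induction j with
  | zero =>
    intro x hx hx0 _
    have hb0 : b 0 x = Real.exp x := by rw [hb, ha0]; ring
    have := hexp x hx hx0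
    rw [hb0]
    push_cast
    nlinarith
  | succ j ih =>
    intro x hx hx0 hjx
    have hjc : ((j:ℝ)+1) * ((j:ℝ)+2) * x ≤ γ := by push_cast at hjx ⊢; linarith
    have hj0 : (0:ℝ) ≤ (j:ℝ) := Nat.cast_nonneg j
    have hprev : (j:ℝ) * ((j:ℝ)+1) * x ≤ γ := by nlinarith
    have hbj := ih x hx hx0 hprev
    -- bound on 2*x*(j+1)
    have hsmall : 2 * x * ((j:ℝ)+1) ≤ γ := by nlinarith
    have hγq : γ < 1/4 := hγ1
    have hden : (0:ℝ) < 2 - b j x := by nlinarith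
    have hbS : b (j+1) x = Real.exp x / (2 - b j x) := by
      rw [hb, haS, ← hb]; field_simp
    rw [hbS]
    rw [div_le_iff₀ hden]
    have hexp' := hexp x hx hx0
    have hgoal : 1 + M * x ≤ (1 + 2 * x * (((j:ℝ)+1) + 1)) * (2 - b j x) := by
      have h1 : (1 + 2 * x * ((j:ℝ)+2)) * (1 - 2 * x * ((j:ℝ)+1))
          = 1 + 2 * x - 4 * x^2 * ((j:ℝ)+1) * ((j:ℝ)+2) := by ring
      have h2 : M * x ≤ 2 * x - 4 * x^2 * ((j:ℝ)+1) * ((j:ℝ)+2) := by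
        have : 4 * x * (((j:ℝ)+1) * ((j:ℝ)+2) * x) ≤ 4 * x * γ := by
          apply mul_le_mul_of_nonneg_left hjc (by linarith)
        simp only [hMdef]; nlinarith
      have h3 : 1 - 2 * x * ((j:ℝ)+1) ≤ 2 - b j x := by linarith
      have h4 : (0:ℝ) ≤ 1 + 2 * x * ((j:ℝ)+2) := by nlinarith
      calc 1 + M * x ≤ (1 + 2 * x * ((j:ℝ)+2)) * (1 - 2 * x * ((j:ℝ)+1)) := by
            rw [h1]; linarith
        _ ≤ (1 + 2 * x * ((j:ℝ)+2)) * (2 - b j x) := by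
            apply mul_le_mul_of_nonneg_left h3 h4
        _ = (1 + 2 * x * (((j:ℝ)+1) + 1)) * (2 - b j x) := by ring
    calc Real.exp x ≤ 1 + M * x := hexp'
      _ ≤ (1 + 2 * x * (((j:ℝ)+1) + 1)) * (2 - b j x) := hgoal
      _ = (1 + 2 * x * ((↑(j+1):ℝ) + 1)) * (2 - b j x) := by push_cast; ring
end
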